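/- If G is a non-cyclic group, then G is finite if and only if G has only finitely many non-power subgroups. -/

import Mathlib

/-- `G^m`: the subgroup generated by all `m`-th powers of elements of `G`. -/
def powerSubgroup (G : Type*) [Group G] (m : ℕ) : Subgroup G :=
  Subgroup.closure (Set.range fun g : G => g ^ m)

/-!
Suppose `G` is infinite with finitely many non-power subgroups. An infinite group has infinitely
many cyclic subgroups, so one of them, `⟨w⟩ ≠ 1`, is a power subgroup `G^t`. Quotients inherit
the finiteness of non-power subgroups, and a group of finite exponent `t` whose power subgroups are
among `G^0, …, G^(t-1)` has finitely many subgroups, hence is finite; so `G/G^t` is finite and `w`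
has infinite order.

As `⟨w⟩` is normal, every `g` conjugates `w` to `w` or `w⁻¹`. An element `a` inverting `w` makes
the subgroups `⟨a w^j⟩` pairwise distinct and not normal (conjugation by `w` moves `a w^j` to
`a w^(j+2)`), so `w` is central. A nontrivial element `u` of finite order then gives the distinct
non-power subgroups `⟨u w^(t(j+1))⟩`: were one of them `G^m`, then `w^m` in it forces `t ∣ m`,
so `G^m ≤ G^t = ⟨w⟩ ∌ u w^(t(j+1))`. Finally, if `G` is torsion-free, its centre has finite index,
the transfer `g ↦ g^[G:Z(G)]` is an injective homomorphism into the centre, so `G` is abelian and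
`g ↦ g^t` embeds `G` into `⟨w⟩`.
-/

open Subgroup Function

def nonpowerSubgroups (G : Type*) [Group G] : Set (Subgroup G) :=
  {H | ∀ m : ℕ, H ≠ powerSubgroup G m}

section NonpowerSubgroups

variable {G : Type*} [Group G]

theorem mem_nonpowerSubgroups {H : Subgroup G} :
    H ∈ nonpowerSubgroups G ↔ ∀ m : ℕ, H ≠ powerSubgroup G m :=
  Iff.rfl

theorem pow_mem_powerSubgroup (x : G) (m : ℕ) : x ^ m ∈ powerSubgroup G m :=
  subset_closure ⟨x, rfl⟩

theorem powerSubgroup_zero : powerSubgroup G 0 = ⊥ := by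
  simp [powerSubgroup]

theorem powerSubgroup_le_of_dvd {m n : ℕ} (h : m ∣ n) :
    powerSubgroup G n ≤ powerSubgroup G m := by
  obtain ⟨k, rfl⟩ := h
  refine (closure_le _).mpr ?_
  rintro _ ⟨x, rfl⟩
  simpa only [pow_mul', SetLike.mem_coe] using pow_mem_powerSubgroup (x ^ k) m

theorem map_powerSubgroup_le {H : Type*} [Group H] (f : G →* H) (m : ℕ) :
    (powerSubgroup G m).map f ≤ powerSubgroup H m := by
  refine map_le_iff_le_comap.mpr <| (closure_le _).mpr ?_
  rintro _ ⟨x, rfl⟩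
  simpa using pow_mem_powerSubgroup (f x) m

theorem map_powerSubgroup {H : Type*} [Group H] {f : G →* H} (hf : Surjective f) (m : ℕ) :
    (powerSubgroup G m).map f = powerSubgroup H m := by
  refine (map_powerSubgroup_le f m).antisymm <| (closure_le _).mpr ?_
  rintro _ ⟨y, rfl⟩
  obtain ⟨x, rfl⟩ := hf y
  exact ⟨x ^ m, pow_mem_powerSubgroup x m, map_pow f x m⟩

instance powerSubgroup_characteristic (m : ℕ) : (powerSubgroup G m).Characteristic :=
  characteristic_iff_map_le.mpr fun φ => map_powerSubgroup_le φ.toMonoidHom m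

theorem powerSubgroup_eq_powerSubgroup_mod {e : ℕ} (he : ∀ x : G, x ^ e = 1) (m : ℕ) :
    powerSubgroup G m = powerSubgroup G (m % e) := by
  unfold powerSubgroup
  congr 2
  funext x
  exact pow_eq_pow_mod m (he x)

theorem eq_zero_of_isOfFinOrder_zpow {w : G} (hw : ¬IsOfFinOrder w) {n : ℤ}
    (h : IsOfFinOrder (w ^ n)) : n = 0 := by
  by_contra hn
  obtain ⟨k, hk, hwk⟩ := isOfFinOrder_iff_zpow_eq_one.mp h
  exact hw <| isOfFinOrder_iff_zpow_eq_one.mpr ⟨n * k, mul_ne_zero hn hk, by rw [zpow_mul, hwk]⟩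

theorem IsOfFinOrder.eq_one_of_mem_zpowers {u w : G} (hu : IsOfFinOrder u)
    (hw : ¬IsOfFinOrder w) (h : u ∈ zpowers w) : u = 1 := by
  obtain ⟨d, rfl⟩ := mem_zpowers_iff.mp h
  rw [eq_zero_of_isOfFinOrder_zpow hw hu, zpow_zero]

theorem infinite_range_zpowers [Infinite G] :
    (Set.range (zpowers : G → Subgroup G)).Infinite := by
  intro hfin
  have htors : ∀ g : G, IsOfFinOrder g := by
    intro g
    by_contra hg
    refine Set.infinite_of_injective_forall_mem (f := fun k : ℕ => zpowers (g ^ ((k : ℤ) + 1)))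
      ?_ (fun _ => Set.mem_range_self _) hfin
    intro a b hab
    have hga : ¬IsOfFinOrder (g ^ ((a : ℤ) + 1)) := fun h =>
      absurd (eq_zero_of_isOfFinOrder_zpow hg h) (by omega)
    have hinj := injective_zpow_iff_not_isOfFinOrder.mpr hg
    rcases (zpowers_eq_zpowers_iff hga).mp hab with h | h
    · have := hinj h; omega
    · rw [← zpow_neg] at h; have := hinj h; omega
  have hcover : (⋃ H ∈ Set.range (zpowers : G → Subgroup G), (H : Set G)).Finite :=
    hfin.biUnion fun _ ⟨g, hg⟩ => hg ▸ (htors g).finite_zpowers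
  exact Set.infinite_univ (hcover.subset fun g _ => Set.mem_biUnion ⟨g, rfl⟩ (mem_zpowers g))

theorem finite_of_forall_pow_eq_one (hS : (nonpowerSubgroups G).Finite) {e : ℕ} (he : 0 < e)
    (hexp : ∀ x : G, x ^ e = 1) : Finite G := by
  by_contra hinf
  have : Infinite G := not_finite_iff_infinite.mp hinf
  have hsub : Set.univ ⊆ nonpowerSubgroups G ∪ powerSubgroup G '' Set.Iio e := by
    rintro H -
    rw [Set.mem_union, or_iff_not_imp_left]
    intro hH
    simp only [mem_nonpowerSubgroups, not_forall, not_not] at hH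
    obtain ⟨m, rfl⟩ := hH
    exact ⟨m % e, Nat.mod_lt m he, (powerSubgroup_eq_powerSubgroup_mod hexp m).symm⟩
  exact infinite_range_zpowers <|
    ((hS.union ((Set.finite_Iio e).image _)).subset hsub).subset (Set.subset_univ _)

theorem finite_nonpowerSubgroups_of_surjective {H : Type*} [Group H] {f : G →* H}
    (hf : Surjective f) (hS : (nonpowerSubgroups G).Finite) : (nonpowerSubgroups H).Finite := by
  refine Set.Finite.of_finite_image (hS.subset ?_) (comap_injective hf).injOn
  rintro _ ⟨K, hK, rfl⟩ m hm
  exact hK m (by rw [← map_comap_eq_self_of_surjective hf K, hm, map_powerSubgroup hf])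

theorem finite_quotient_powerSubgroup (hS : (nonpowerSubgroups G).Finite) {m : ℕ} (hm : 0 < m) :
    Finite (G ⧸ powerSubgroup G m) := by
  refine finite_of_forall_pow_eq_one
    (finite_nonpowerSubgroups_of_surjective (QuotientGroup.mk'_surjective _) hS) hm fun x => ?_
  induction x using QuotientGroup.induction_on with
  | H x => rw [← QuotientGroup.mk_pow, QuotientGroup.eq_one_iff]; exact pow_mem_powerSubgroup x m

theorem exists_powerSubgroup_eq_zpowers [Infinite G] (hS : (nonpowerSubgroups G).Finite) :
    ∃ (w : G) (t : ℕ), ¬IsOfFinOrder w ∧ 0 < t ∧ powerSubgroup G t = zpowers w := by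
  obtain ⟨_, ⟨w, rfl⟩, hw⟩ :=
    (infinite_range_zpowers.sdiff (hS.union (Set.finite_singleton ⊥))).nonempty
  simp only [Set.mem_union, Set.mem_singleton_iff, not_or, mem_nonpowerSubgroups, not_forall,
    not_not] at hw
  obtain ⟨⟨t, hwt⟩, hbot⟩ := hw
  have ht : 0 < t := Nat.pos_of_ne_zero <| by rintro rfl; exact hbot (hwt.trans powerSubgroup_zero)
  refine ⟨w, t, fun hwf => ?_, ht, hwt.symm⟩
  have := finite_quotient_powerSubgroup hS ht
  have : Finite (powerSubgroup G t) := hwt ▸ hwf.finite_zpowers.to_subtype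
  have := Finite.of_subgroup_quotient (powerSubgroup G t)
  exact not_finite G

theorem zpowers_conj_eq_of_normal {w : G} (hN : (zpowers w).Normal) (g : G) :
    zpowers (g * w * g⁻¹) = zpowers w := by
  refine le_antisymm (zpowers_le.mpr (hN.conj_mem w (mem_zpowers w) g)) (zpowers_le.mpr ?_)
  obtain ⟨d, hd⟩ := hN.conj_mem w (mem_zpowers w) g⁻¹
  exact ⟨d, by simp only [conj_zpow, hd]; group⟩

theorem conj_eq_or_eq_inv_of_normal_zpowers {w : G} (hw : ¬IsOfFinOrder w)
    (hN : (zpowers w).Normal) (g : G) : g * w * g⁻¹ = w ∨ g * w * g⁻¹ = w⁻¹ := by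
  rcases (zpowers_eq_zpowers_iff hw).mp (zpowers_conj_eq_of_normal hN g).symm with h | h
  · exact Or.inl h.symm
  · exact Or.inr h.symm

theorem eq_zero_of_zpow_mem_zpowers_of_conj_eq_inv {w a : G} (hw : ¬IsOfFinOrder w)
    (hinv : a * w * a⁻¹ = w⁻¹) {k : ℤ} (hk : w ^ k ∈ zpowers a) : k = 0 := by
  obtain ⟨c, hc⟩ := hk
  have hcomm : a * w ^ k * a⁻¹ = w ^ k := by rw [← hc]; group
  rw [← conj_zpow, hinv, inv_zpow, ← zpow_neg] at hcomm
  have := injective_zpow_iff_not_isOfFinOrder.mpr hw hcomm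
  omega

theorem eq_zero_or_eq_of_mul_zpow_mem_zpowers_of_conj_eq_inv {w a : G} (hw : ¬IsOfFinOrder w)
    (hinv : a * w * a⁻¹ = w⁻¹) {j k : ℤ} (hk : a * w ^ k ∈ zpowers (a * w ^ j)) :
    k = 0 ∨ k = j := by
  have hconj : ∀ i : ℤ, a * w ^ i * a⁻¹ = w ^ (-i) := fun i => by
    rw [← conj_zpow, hinv, inv_zpow, zpow_neg]
  have hsq : (a * w ^ j) ^ (2 : ℤ) = a ^ (2 : ℤ) :=
    calc (a * w ^ j) ^ (2 : ℤ) = a * (a * w ^ (-j) * a⁻¹) * a * w ^ j := by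
          rw [hconj, neg_neg, zpow_two]; group
      _ = a ^ (2 : ℤ) := by rw [zpow_two]; group
  obtain ⟨c, hc⟩ := hk
  obtain ⟨b, rfl | rfl⟩ := Int.even_or_odd' c
  · left
    simp only [zpow_mul, hsq] at hc
    refine eq_zero_of_zpow_mem_zpowers_of_conj_eq_inv hw hinv ⟨2 * b - 1, ?_⟩
    have hwk : w ^ k = a⁻¹ * (a ^ (2 : ℤ)) ^ b := by rw [hc]; group
    simp only [hwk]; group
  · right
    simp only [zpow_add_one, zpow_mul, hsq] at hc
    refine sub_eq_zero.mp (eq_zero_of_zpow_mem_zpowers_of_conj_eq_inv hw hinv ⟨2 * b, ?_⟩)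
    have hwk : w ^ k = a⁻¹ * ((a ^ (2 : ℤ)) ^ b * (a * w ^ j)) := by rw [hc]; group
    simp only [zpow_sub, hwk]; group

theorem infinite_nonpowerSubgroups_of_conj_eq_inv {w a : G} (hw : ¬IsOfFinOrder w)
    (hinv : a * w * a⁻¹ = w⁻¹) : (nonpowerSubgroups G).Infinite := by
  refine Set.infinite_of_injective_forall_mem (f := fun j : ℕ => zpowers (a * w ^ (j : ℤ)))
    (fun i j hij => ?_) (fun j m hm => ?_)
  · replace hij : zpowers (a * w ^ (i : ℤ)) = zpowers (a * w ^ (j : ℤ)) := hij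
    have hj := eq_zero_or_eq_of_mul_zpow_mem_zpowers_of_conj_eq_inv hw hinv
      (hij ▸ mem_zpowers _)
    have hi := eq_zero_or_eq_of_mul_zpow_mem_zpowers_of_conj_eq_inv hw hinv
      (hij.symm ▸ mem_zpowers _)
    omega
  · have hswap : w⁻¹ * a = a * w := by rw [← hinv]; group
    have hshift : w⁻¹ * (a * w ^ (j : ℤ)) * w⁻¹⁻¹ = a * w ^ ((j : ℤ) + 2) :=
      calc w⁻¹ * (a * w ^ (j : ℤ)) * w⁻¹⁻¹ = w⁻¹ * a * w ^ (j : ℤ) * w := by group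
        _ = a * w ^ ((j : ℤ) + 2) := by rw [hswap]; group
    have hmem := (hm ▸ inferInstance : (zpowers (a * w ^ (j : ℤ))).Normal).conj_mem _
      (mem_zpowers _) w⁻¹
    rw [hshift] at hmem
    have := eq_zero_or_eq_of_mul_zpow_mem_zpowers_of_conj_eq_inv hw hinv hmem
    omega

theorem mem_center_of_normal_zpowers (hS : (nonpowerSubgroups G).Finite) {w : G}
    (hw : ¬IsOfFinOrder w) (hN : (zpowers w).Normal) : w ∈ center G := by
  refine mem_center_iff.mpr fun g => ?_
  rcases conj_eq_or_eq_inv_of_normal_zpowers hw hN g with h | h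
  · exact mul_inv_eq_iff_eq_mul.mp h
  · exact absurd hS (infinite_nonpowerSubgroups_of_conj_eq_inv hw h)

theorem dvd_of_zpow_mul_zpow_mem_zpowers {u w : G} (hu : IsOfFinOrder u) (hw : ¬IsOfFinOrder w)
    (huw : Commute u w) {s k l : ℤ} (h : u ^ s * w ^ k ∈ zpowers (u * w ^ l)) : l ∣ k := by
  obtain ⟨c, hc⟩ := mem_zpowers_iff.mp h
  rw [(huw.zpow_right l).mul_zpow, ← zpow_mul] at hc
  have hwk : w ^ k = u ^ (-s) * u ^ c * w ^ (l * c) := by rw [mul_assoc, hc]; group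
  have hwu : w ^ (k - l * c) = u ^ (c - s) := by rw [zpow_sub w, hwk]; group
  exact ⟨c, by linarith [eq_zero_of_isOfFinOrder_zpow hw (hwu ▸ hu.zpow)]⟩

theorem infinite_nonpowerSubgroups_of_isOfFinOrder {u w : G} (hu : IsOfFinOrder u) (hu1 : u ≠ 1)
    (hw : ¬IsOfFinOrder w) (huw : Commute u w) {t : ℕ} (ht : 0 < t)
    (hwt : powerSubgroup G t = zpowers w) : (nonpowerSubgroups G).Infinite := by
  refine Set.infinite_of_injective_forall_mem
    (f := fun j : ℕ => zpowers (u * w ^ ((t : ℤ) * (j + 1)))) (fun i j hij => ?_)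
    (fun j m hm => ?_)
  · replace hij : zpowers (u * w ^ ((t : ℤ) * (i + 1))) =
        zpowers (u * w ^ ((t : ℤ) * (j + 1))) := hij
    have hij_dvd := dvd_of_zpow_mul_zpow_mem_zpowers hu hw huw (s := 1)
      (k := t * (j + 1)) (l := t * (i + 1)) (by rw [zpow_one, hij]; exact mem_zpowers _)
    have hji_dvd := dvd_of_zpow_mul_zpow_mem_zpowers hu hw huw (s := 1)
      (k := t * (i + 1)) (l := t * (j + 1)) (by rw [zpow_one, ← hij]; exact mem_zpowers _)
    have := Int.dvd_antisymm (by positivity) (by positivity) hij_dvd hji_dvd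
    have := mul_left_cancel₀ (by positivity : (t : ℤ) ≠ 0) this
    omega
  · have hdvd : (t : ℤ) * (j + 1) ∣ m := dvd_of_zpow_mul_zpow_mem_zpowers hu hw huw (s := 0)
      (by rw [zpow_zero, one_mul, hm, zpow_natCast]; exact pow_mem_powerSubgroup w m)
    have htm : t ∣ m := Int.natCast_dvd_natCast.mp (dvd_of_mul_right_dvd hdvd)
    have hmem : u * w ^ ((t : ℤ) * (j + 1)) ∈ zpowers w :=
      hwt ▸ powerSubgroup_le_of_dvd htm (hm ▸ mem_zpowers _)
    exact hu1 <| hu.eq_one_of_mem_zpowers hw <|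
      (mul_mem_cancel_right (zpow_mem (mem_zpowers w) _)).mp hmem

theorem commute_of_finiteIndex_center (htf : ∀ x : G, IsOfFinOrder x → x = 1)
    [(center G).FiniteIndex] (x y : G) : Commute x y := by
  have hinj : Injective (MonoidHom.transferCenterPow G) := by
    refine (injective_iff_map_eq_one _).mpr fun x hx => htf x ?_
    refine isOfFinOrder_iff_pow_eq_one.mpr
      ⟨_, Nat.pos_of_ne_zero (FiniteIndex.index_ne_zero (H := center G)), ?_⟩
    rw [← MonoidHom.transferCenterPow_apply, hx, OneMemClass.coe_one]
  refine hinj ?_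
  rw [map_mul, map_mul]
  exact Subtype.ext (mem_center_iff.mp (MonoidHom.transferCenterPow G y).2 _)

theorem isCyclic_of_powerSubgroup_eq_zpowers (htf : ∀ x : G, IsOfFinOrder x → x = 1)
    (hcomm : ∀ x y : G, Commute x y) {w : G} {t : ℕ} (ht : 0 < t)
    (hwt : powerSubgroup G t = zpowers w) : IsCyclic G := by
  let φ : G →* zpowers w :=
    (MonoidHom.mk' (· ^ t) fun x y => (hcomm x y).mul_pow t).codRestrict _
      fun x => hwt ▸ pow_mem_powerSubgroup x t
  refine isCyclic_of_injective φ <| (injective_iff_map_eq_one φ).mpr fun x hx => ?_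
  exact htf x (isOfFinOrder_iff_pow_eq_one.mpr ⟨t, ht, congrArg Subtype.val hx⟩)

theorem isCyclic_of_finite_nonpowerSubgroups [Infinite G] (hS : (nonpowerSubgroups G).Finite) :
    IsCyclic G := by
  obtain ⟨w, t, hw, ht, hwt⟩ := exists_powerSubgroup_eq_zpowers hS
  have hcenter : w ∈ center G := mem_center_of_normal_zpowers hS hw (hwt ▸ inferInstance)
  have := finite_quotient_powerSubgroup hS ht
  have : (powerSubgroup G t).FiniteIndex := finiteIndex_of_finite_quotient
  have : (center G).FiniteIndex := finiteIndex_of_le (hwt.trans_le (zpowers_le.mpr hcenter))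
  by_cases htf : ∀ x : G, IsOfFinOrder x → x = 1
  · exact isCyclic_of_powerSubgroup_eq_zpowers htf (commute_of_finiteIndex_center htf) ht hwt
  · push Not at htf
    obtain ⟨u, hu, hu1⟩ := htf
    exact absurd hS <|
      infinite_nonpowerSubgroups_of_isOfFinOrder hu hu1 hw (mem_center_iff.mp hcenter u) ht hwt

end NonpowerSubgroups

theorem finite_iff_finitely_many_nonpower {G : Type*} [Group G] (h : ¬IsCyclic G) :
    Finite G ↔ {H : Subgroup G | ∀ m : ℕ, H ≠ powerSubgroup G m}.Finite := by
  refine ⟨fun _ => Set.toFinite _, fun hS => ?_⟩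
  by_contra hfin
  have : Infinite G := not_finite_iff_infinite.mp hfin
  exact h (isCyclic_of_finite_nonpowerSubgroups hS)
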